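/- arXiv:1611.10064 — 2 statements merged into one kernel-verified Lean document; each statement's English description precedes it below -/
import Mathlib

section
/- Let g ≥ 3, let 0 ≤ k < (2g−3)(g−2), and let τ ∈ S_{2g−3}. If σ₁, σ₂ ∈ A(k) but σ₁ ∉ A(k+1) and σ₂ ∉ A(k+1), then l(σ₁σ₂τ) ≤ l(σ₁) + l(σ₂) + l(τ) − 2; in particular no such pair (σ₁, σ₂) lies in ℱ_k(i, j, τ) for i = l(σ₁), j = l(σ₂). -/
/-!
A transposition `swap a b` changes `l` by exactly one: by parity it changes `l`, and since it
only touches the (at most two) cycles of `σ` through `a` and `b`, it splits one cycle or merges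
two. Hence `l(fg) ≤ l(f) + l(g)`, by peeling transpositions off `f`. For `t = s_{k+1}`, the
hypotheses say `l(σᵢ t) = l(σᵢ) - 1`, so `σ₁σ₂τ = (σ₁t)(tσ₂τ)` and subadditivity, together with
`l(tσ₂) = l(σ₂t)`, give `l(σ₁σ₂τ) ≤ l(σ₁) + l(σ₂) + l(τ) - 2`.
-/

/-- `permLen σ = n - c(σ)` where `c(σ)` is the number of orbits (cycles, counting
fixed points) of `σ`.  Equivalently, it is `#support σ - (number of nontrivial cycles)`. -/
def permLen {n : ℕ} (σ : Equiv.Perm (Fin n)) : ℕ :=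
  σ.support.card - Multiset.card σ.cycleType

/-- Given an enumeration `s` of the transpositions (indexed from 1), the set
`A(k) = {σ : l(σ sᵢ) > l(σ) for all 1 ≤ i ≤ k}`. -/
def AkSet {n : ℕ} (s : ℕ → Equiv.Perm (Fin n)) (k : ℕ) : Set (Equiv.Perm (Fin n)) :=
  {σ | ∀ i : ℕ, 1 ≤ i → i ≤ k → permLen σ < permLen (σ * s i)}

/-- The set `ℱ_k(i, j, τ) = {(σ₁, σ₂) ∈ A(k) × A(k) :
l(σ₁) = i, l(σ₂) = j, l(σ₁σ₂τ) = i + j + l(τ)}`. -/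
def FSet {n : ℕ} (s : ℕ → Equiv.Perm (Fin n)) (k i j : ℕ) (τ : Equiv.Perm (Fin n)) :
    Set (Equiv.Perm (Fin n) × Equiv.Perm (Fin n)) :=
  {p | p.1 ∈ AkSet s k ∧ p.2 ∈ AkSet s k ∧ permLen p.1 = i ∧ permLen p.2 = j ∧
    permLen (p.1 * p.2 * τ) = i + j + permLen τ}

/-- `F_k(i, j, τ) = |ℱ_k(i, j, τ)|`. -/
noncomputable def Fnum {n : ℕ} (s : ℕ → Equiv.Perm (Fin n)) (k i j : ℕ)
    (τ : Equiv.Perm (Fin n)) : ℕ :=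
  (FSet s k i j τ).ncard

namespace Equiv.Perm

variable {α : Type*} [Fintype α] [DecidableEq α]

theorem card_cycleType_le_sum (σ : Perm α) : Multiset.card σ.cycleType ≤ σ.cycleType.sum := by
  simpa using Multiset.card_nsmul_le_sum (s := σ.cycleType) (a := 1)
    fun _ hx => one_le_two.trans (two_le_of_mem_cycleType hx)

/-- `c` is a product of some of the disjoint cycles of `σ`. -/
def AgreesOnSupport (c σ : Perm α) : Prop :=
  ∀ y ∈ c.support, c y = σ y

theorem agreesOnSupport_cycleOf (σ : Perm α) (a : α) : AgreesOnSupport (σ.cycleOf a) σ :=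
  fun _ hy => (mem_support_cycleOf_iff.1 hy).1.cycleOf_apply

theorem AgreesOnSupport.disjoint_inv_mul {c σ : Perm α} (h : AgreesOnSupport c σ) :
    Perm.Disjoint c (c⁻¹ * σ) := by
  intro y
  by_cases hy : c y = y
  · exact Or.inl hy
  · right
    rw [mul_apply, inv_eq_iff_eq]
    exact (h y (mem_support.2 hy)).symm

theorem AgreesOnSupport.mul {c₁ c₂ σ : Perm α} (h₁ : AgreesOnSupport c₁ σ)
    (h₂ : AgreesOnSupport c₂ σ) (hd : Perm.Disjoint c₁ c₂) : AgreesOnSupport (c₁ * c₂) σ := by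
  intro y hy
  rcases Finset.mem_union.1 (hd.support_mul ▸ hy) with hy₁ | hy₂
  · rw [mul_apply, (hd.symm y).resolve_right (mem_support.1 hy₁), h₁ y hy₁]
  · rw [hd.commute.eq, mul_apply, (hd y).resolve_right (mem_support.1 hy₂), h₂ y hy₂]

theorem disjoint_cycleOf_of_not_sameCycle {σ : Perm α} {a b : α} (h : ¬σ.SameCycle a b) :
    Perm.Disjoint (σ.cycleOf a) (σ.cycleOf b) := by
  rw [disjoint_iff_disjoint_support, Finset.disjoint_left]
  intro y hya hyb
  exact h ((mem_support_cycleOf_iff.1 hya).1.trans (mem_support_cycleOf_iff.1 hyb).1.symm)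

end Equiv.Perm

open Equiv Equiv.Perm Finset

section PermLen

variable {n : ℕ}

theorem permLen_eq (σ : Perm (Fin n)) :
    permLen σ = σ.cycleType.sum - Multiset.card σ.cycleType := by
  rw [permLen, sum_cycleType]

@[simp] theorem permLen_one : permLen (1 : Perm (Fin n)) = 0 := by
  simp [permLen]

theorem permLen_conj (σ τ : Perm (Fin n)) : permLen (τ * σ * τ⁻¹) = permLen σ := by
  rw [permLen_eq, permLen_eq, cycleType_conj]

theorem permLen_mul_comm (f g : Perm (Fin n)) : permLen (f * g) = permLen (g * f) := by
  rw [← permLen_conj (f * g) g, mul_assoc, mul_inv_cancel_right]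

theorem permLen_mul_of_disjoint {f g : Perm (Fin n)} (h : Perm.Disjoint f g) :
    permLen (f * g) = permLen f + permLen g := by
  have hf := card_cycleType_le_sum f
  have hg := card_cycleType_le_sum g
  rw [permLen_eq, permLen_eq, permLen_eq, h.cycleType_mul, Multiset.sum_add, Multiset.card_add]
  omega

theorem Equiv.Perm.IsCycle.permLen_add_one {σ : Perm (Fin n)} (h : σ.IsCycle) :
    permLen σ + 1 = #σ.support := by
  have := h.two_le_card_support
  rw [permLen, card_cycleType_eq_one.2 h]
  omega

theorem permLen_add_one_le_card_support {σ : Perm (Fin n)} (h : σ ≠ 1) :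
    permLen σ + 1 ≤ #σ.support := by
  have hpos : 1 ≤ Multiset.card σ.cycleType := card_cycleType_pos.2 h
  have hle := card_cycleType_le_sum σ
  rw [sum_cycleType] at hle
  rw [permLen]
  omega

theorem permLen_cycleOf_add_one (σ : Perm (Fin n)) (a : Fin n) :
    permLen (σ.cycleOf a) + 1 = #(insert a (σ.cycleOf a).support) := by
  by_cases ha : σ a = a
  · simp [(cycleOf_eq_one_iff σ).2 ha]
  · rw [insert_eq_of_mem (mem_support_cycleOf_iff.2 ⟨.refl σ a, mem_support.2 ha⟩),
      (isCycle_cycleOf σ ha).permLen_add_one]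

theorem permLen_eq_add_of_agreesOnSupport {c σ : Perm (Fin n)} (h : AgreesOnSupport c σ) :
    permLen σ = permLen c + permLen (c⁻¹ * σ) := by
  rw [← permLen_mul_of_disjoint h.disjoint_inv_mul, mul_inv_cancel_left]

theorem sign_eq_neg_one_pow_permLen (σ : Perm (Fin n)) : sign σ = (-1 : ℤˣ) ^ permLen σ := by
  have hle := card_cycleType_le_sum σ
  have hsum : σ.cycleType.sum + Multiset.card σ.cycleType =
      permLen σ + 2 * Multiset.card σ.cycleType := by
    rw [permLen_eq]; omega
  rw [sign_of_cycleType, hsum, pow_add, pow_mul]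
  norm_num

theorem permLen_ne_of_sign_ne {f g : Perm (Fin n)} (h : sign f ≠ sign g) :
    permLen f ≠ permLen g := by
  intro hfg
  rw [sign_eq_neg_one_pow_permLen, sign_eq_neg_one_pow_permLen, hfg] at h
  exact h rfl

theorem permLen_mul_add_one_le_of_support_subset {f d : Perm (Fin n)} {S : Finset (Fin n)}
    (hS : S.Nonempty) (hf : f.support ⊆ S) (hd : _root_.Disjoint S d.support) :
    permLen (f * d) + 1 ≤ #S + permLen d := by
  rw [permLen_mul_of_disjoint (disjoint_iff_disjoint_support.2 (hd.mono_left hf))]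
  by_cases h1 : f = 1
  · simp [h1, hS.card_pos]
  · have := permLen_add_one_le_card_support h1
    have := card_le_card hf
    omega

/-- `swap a b * c` is supported in `{a, b} ∪ c.support`, which `c⁻¹ * σ` fixes pointwise. -/
theorem permLen_swap_mul_add_one_le {σ c : Perm (Fin n)} {a b : Fin n}
    (hc : AgreesOnSupport c σ) (ha : c a = σ a) (hb : c b = σ b) :
    permLen (swap a b * σ) + 1 ≤ #(insert a (insert b c.support)) + permLen (c⁻¹ * σ) := by
  have hfix : ∀ x, c x = σ x → x ∉ (c⁻¹ * σ).support := fun x hx => by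
    rw [notMem_support, mul_apply, inv_eq_iff_eq, hx]
  have hsupp : (swap a b * c).support ⊆ insert a (insert b c.support) := by
    intro x hx
    by_contra hx'
    simp only [mem_insert, not_or] at hx'
    exact mem_support.1 hx (by
      rw [mul_apply, notMem_support.1 hx'.2.2, swap_apply_of_ne_of_ne hx'.1 hx'.2.1])
  have hdisj : _root_.Disjoint (insert a (insert b c.support)) (c⁻¹ * σ).support := by
    rw [disjoint_insert_left, disjoint_insert_left]
    exact ⟨hfix a ha, hfix b hb, disjoint_iff_disjoint_support.1 hc.disjoint_inv_mul⟩
  rw [← mul_inv_cancel_left c σ, ← mul_assoc, inv_mul_cancel_left]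
  exact permLen_mul_add_one_le_of_support_subset (insert_nonempty _ _) hsupp hdisj

theorem permLen_swap_mul_lt_of_sameCycle {σ : Perm (Fin n)} {a b : Fin n} (hab : a ≠ b)
    (h : σ.SameCycle a b) : permLen (swap a b * σ) < permLen σ := by
  have ha : σ a ≠ a := fun ha => hab (h.eq_of_left ha)
  have hmem : ∀ {x}, σ.SameCycle a x → x ∈ (σ.cycleOf a).support := fun hx =>
    mem_support_cycleOf_iff.2 ⟨hx, mem_support.2 ha⟩
  have key := permLen_swap_mul_add_one_le (agreesOnSupport_cycleOf σ a)
    (cycleOf_apply_self σ a) h.cycleOf_apply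
  rw [insert_eq_of_mem (hmem h), insert_eq_of_mem (hmem (.refl σ a)),
    ← (isCycle_cycleOf σ ha).permLen_add_one] at key
  have hσ := permLen_eq_add_of_agreesOnSupport (agreesOnSupport_cycleOf σ a)
  refine lt_of_le_of_ne (by omega) (permLen_ne_of_sign_ne ?_)
  rw [Perm.sign_mul, sign_swap hab, neg_one_mul]
  exact (units_ne_neg_self _).symm

theorem permLen_swap_mul_le_of_not_sameCycle {σ : Perm (Fin n)} {a b : Fin n}
    (hab : ¬σ.SameCycle a b) : permLen (swap a b * σ) ≤ permLen σ + 1 := by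
  have hd := disjoint_cycleOf_of_not_sameCycle hab
  have hc := (agreesOnSupport_cycleOf σ a).mul (agreesOnSupport_cycleOf σ b) hd
  have ha : (σ.cycleOf a * σ.cycleOf b) a = σ a := by
    rw [mul_apply, cycleOf_apply_of_not_sameCycle (mt SameCycle.symm hab), cycleOf_apply_self]
  have hb : (σ.cycleOf a * σ.cycleOf b) b = σ b := by
    rw [hd.commute.eq, mul_apply, cycleOf_apply_of_not_sameCycle hab, cycleOf_apply_self]
  have key := permLen_swap_mul_add_one_le hc ha hb
  have hsub : insert a (insert b (σ.cycleOf a * σ.cycleOf b).support) ⊆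
      insert a (σ.cycleOf a).support ∪ insert b (σ.cycleOf b).support := by
    intro x
    simp only [hd.support_mul, mem_insert, mem_union]
    tauto
  have hcard := (card_le_card hsub).trans (card_union_le _ _)
  have hσ := permLen_eq_add_of_agreesOnSupport hc
  have hcd_len := permLen_mul_of_disjoint hd
  have ha_len := permLen_cycleOf_add_one σ a
  have hb_len := permLen_cycleOf_add_one σ b
  omega

theorem permLen_swap_mul_le (σ : Perm (Fin n)) (a b : Fin n) :
    permLen (swap a b * σ) ≤ permLen σ + 1 := by
  by_cases hsame : σ.SameCycle a b
  · rcases eq_or_ne a b with rfl | hab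
    · rw [swap_self, ← Perm.one_def, one_mul]
      exact Nat.le_succ _
    · exact (permLen_swap_mul_lt_of_sameCycle hab hsame).le.trans (Nat.le_succ _)
  · exact permLen_swap_mul_le_of_not_sameCycle hsame

theorem permLen_mul_le (f g : Perm (Fin n)) : permLen (f * g) ≤ permLen f + permLen g := by
  by_cases hf : f = 1
  · simp [hf]
  obtain ⟨a, ha⟩ : ∃ a, f a ≠ a := by
    by_contra! h
    exact hf (Perm.ext h)
  have hlt := permLen_swap_mul_lt_of_sameCycle (Ne.symm ha) (sameCycle_apply_right.2 (.refl f a))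
  have ih := permLen_mul_le (swap a (f a) * f) g
  calc permLen (f * g) = permLen (swap a (f a) * (swap a (f a) * f * g)) := by
        rw [mul_assoc, swap_mul_self_mul]
    _ ≤ permLen (swap a (f a) * f * g) + 1 := permLen_swap_mul_le _ _ _
    _ ≤ permLen f + permLen g := by omega
termination_by permLen f

theorem permLen_mul_mul_add_two_le {σ₁ σ₂ τ t : Perm (Fin n)} (ht : t * t = 1)
    (h₁ : permLen (σ₁ * t) < permLen σ₁) (h₂ : permLen (σ₂ * t) < permLen σ₂) :
    permLen (σ₁ * σ₂ * τ) + 2 ≤ permLen σ₁ + permLen σ₂ + permLen τ := by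
  have hsplit : σ₁ * σ₂ * τ = σ₁ * t * (t * σ₂ * τ) := by
    simp only [← mul_assoc]; rw [mul_assoc σ₁ t t, ht, mul_one]
  have := permLen_mul_le (σ₁ * t) (t * σ₂ * τ)
  have := permLen_mul_le (t * σ₂) τ
  rw [permLen_mul_comm t σ₂] at this
  rw [hsplit]
  omega

theorem permLen_mul_lt_of_mem_AkSet_of_notMem_succ {s : ℕ → Perm (Fin n)} {k : ℕ}
    {σ : Perm (Fin n)} (hs : (s (k + 1)).IsSwap) (h : σ ∈ AkSet s k)
    (h' : σ ∉ AkSet s (k + 1)) : permLen (σ * s (k + 1)) < permLen σ := by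
  simp only [AkSet, Set.mem_ofPred_eq, not_forall, not_lt] at h'
  obtain ⟨i, hi₁, hi₂, hle⟩ := h'
  obtain rfl : i = k + 1 := by
    by_contra hne
    exact (h i hi₁ (by omega)).not_ge hle
  refine lt_of_le_of_ne hle (permLen_ne_of_sign_ne ?_)
  rw [Perm.sign_mul, hs.sign_eq, mul_neg_one]
  exact (units_ne_neg_self _).symm

end PermLen

theorem stmt_3_general (g : ℕ)
    (s : ℕ → Equiv.Perm (Fin (2 * g - 3)))
    (hswap : ∀ i : ℕ, 1 ≤ i → i ≤ (2 * g - 3) * (g - 2) → (s i).IsSwap)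
    (k : ℕ) (hk : k < (2 * g - 3) * (g - 2)) (τ : Equiv.Perm (Fin (2 * g - 3)))
    (σ₁ σ₂ : Equiv.Perm (Fin (2 * g - 3)))
    (h₁ : σ₁ ∈ AkSet s k) (h₂ : σ₂ ∈ AkSet s k)
    (h₁' : σ₁ ∉ AkSet s (k + 1)) (h₂' : σ₂ ∉ AkSet s (k + 1)) :
    permLen (σ₁ * σ₂ * τ) + 2 ≤ permLen σ₁ + permLen σ₂ + permLen τ ∧
      (σ₁, σ₂) ∉ FSet s k (permLen σ₁) (permLen σ₂) τ := by
  have ht : (s (k + 1)).IsSwap := hswap (k + 1) (by omega) hk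
  have htt : s (k + 1) * s (k + 1) = 1 := by
    obtain ⟨x, y, -, hxy⟩ := ht
    rw [hxy, swap_mul_self]
  have hbound : permLen (σ₁ * σ₂ * τ) + 2 ≤ permLen σ₁ + permLen σ₂ + permLen τ :=
    permLen_mul_mul_add_two_le htt
      (permLen_mul_lt_of_mem_AkSet_of_notMem_succ ht h₁ h₁')
      (permLen_mul_lt_of_mem_AkSet_of_notMem_succ ht h₂ h₂')
  refine ⟨hbound, fun hmem => ?_⟩
  have hlen : permLen (σ₁ * σ₂ * τ) = permLen σ₁ + permLen σ₂ + permLen τ := hmem.2.2.2.2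
  omega

/-- For `g ≥ 3`, an enumeration of the transpositions as above,
`0 ≤ k < (2g-3)(g-2)` and `τ ∈ S_{2g-3}`: if `σ₁, σ₂ ∈ A(k)` but
`σ₁ ∉ A(k+1)` and `σ₂ ∉ A(k+1)`, then `l(σ₁σ₂τ) ≤ l(σ₁) + l(σ₂) + l(τ) - 2`;
in particular `(σ₁, σ₂) ∉ ℱ_k(l(σ₁), l(σ₂), τ)`. -/
theorem stmt_3 (g : ℕ) (hg : 3 ≤ g)
    (s : ℕ → Equiv.Perm (Fin (2 * g - 3)))
    (hswap : ∀ i : ℕ, 1 ≤ i → i ≤ (2 * g - 3) * (g - 2) → (s i).IsSwap)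
    (hinj : ∀ i j : ℕ, 1 ≤ i → i ≤ (2 * g - 3) * (g - 2) →
      1 ≤ j → j ≤ (2 * g - 3) * (g - 2) → s i = s j → i = j)
    (hsurj : ∀ t : Equiv.Perm (Fin (2 * g - 3)), t.IsSwap →
      ∃ i : ℕ, 1 ≤ i ∧ i ≤ (2 * g - 3) * (g - 2) ∧ s i = t)
    (hprod : permLen (((List.range (2 * g - 4)).map (fun i => s (i + 1))).prod) = 2 * g - 4)
    (k : ℕ) (hk : k < (2 * g - 3) * (g - 2)) (τ : Equiv.Perm (Fin (2 * g - 3)))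
    (σ₁ σ₂ : Equiv.Perm (Fin (2 * g - 3)))
    (h₁ : σ₁ ∈ AkSet s k) (h₂ : σ₂ ∈ AkSet s k)
    (h₁' : σ₁ ∉ AkSet s (k + 1)) (h₂' : σ₂ ∉ AkSet s (k + 1)) :
    permLen (σ₁ * σ₂ * τ) + 2 ≤ permLen σ₁ + permLen σ₂ + permLen τ ∧
      (σ₁, σ₂) ∉ FSet s k (permLen σ₁) (permLen σ₂) τ :=
  stmt_3_general g s hswap k hk τ σ₁ σ₂ h₁ h₂ h₁' h₂'
end

section
/- Let g ≥ 3 and let 0 ≤ k < (2g−3)(g−2). For every σ ∈ A(k), either σ ∈ A(k+1), or the permutation σ' = σ s_{k+1} satisfies σ' ∈ A(k+1), l(σ') = l(σ) − 1, and σ = σ' s_{k+1}. -/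
open Equiv Equiv.Perm

namespace Stmt5Aux

variable {n : ℕ}

/-- number of orbits (cycles including fixed points) -/
noncomputable def cOrb (σ : Equiv.Perm (Fin n)) : ℕ :=
  Nat.card (Quotient (Equiv.Perm.SameCycle.setoid σ))

lemma ctc_le_support (σ : Equiv.Perm (Fin n)) :
    Multiset.card σ.cycleType ≤ σ.support.card := by
  rw [← Equiv.Perm.sum_cycleType]
  have h := Multiset.card_nsmul_le_sum (s := σ.cycleType) (a := 1)
    (fun x hx => Equiv.Perm.one_lt_of_mem_cycleType hx |>.le)
  simpa using h

lemma cOrb_eq (σ : Equiv.Perm (Fin n)) :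
    cOrb σ = (n - σ.support.card) + Multiset.card σ.cycleType := by
  classical
  have hfun : ∀ a : Fin n, ¬ σ a = a → σ.cycleOf a ∈ σ.cycleFactorsFinset := by
    intro a ha
    exact Equiv.Perm.cycleOf_mem_cycleFactorsFinset_iff.mpr (Equiv.Perm.mem_support.mpr ha)
  let g : Fin n → ({a : Fin n // σ a = a} ⊕ {c : Equiv.Perm (Fin n) // c ∈ σ.cycleFactorsFinset}) :=
    fun a => if h : σ a = a then Sum.inl ⟨a, h⟩ else Sum.inr ⟨σ.cycleOf a, hfun a h⟩
  have hwd : ∀ a b : Fin n, σ.SameCycle a b → g a = g b := by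
    intro a b hab
    by_cases ha : σ a = a
    · have hb : b = a := by
        obtain ⟨i, hi⟩ := hab
        rw [← hi, Equiv.Perm.zpow_apply_eq_self_of_apply_eq_self ha]
      rw [hb]
    · have hb : ¬ σ b = b := by
        intro hb
        obtain ⟨i, hi⟩ := hab.symm
        rw [Equiv.Perm.zpow_apply_eq_self_of_apply_eq_self hb] at hi
        rw [← hi] at ha
        exact ha hb
      simp only [g, dif_neg ha, dif_neg hb, Sum.inr.injEq, Subtype.mk.injEq]
      exact hab.cycleOf_eq
  let f : Quotient (Equiv.Perm.SameCycle.setoid σ) →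
      ({a : Fin n // σ a = a} ⊕ {c : Equiv.Perm (Fin n) // c ∈ σ.cycleFactorsFinset}) :=
    Quotient.lift g hwd
  have hbij : Function.Bijective f := by
    constructor
    · intro q1 q2
      induction q1 using Quotient.inductionOn with | _ a =>
      induction q2 using Quotient.inductionOn with | _ b =>
      intro h
      simp only [f, Quotient.lift_mk, g] at h
      by_cases ha : σ a = a <;> by_cases hb : σ b = b
      · rw [dif_pos ha, dif_pos hb] at h
        simp only [Sum.inl.injEq, Subtype.mk.injEq] at h
        exact congrArg _ h
      · rw [dif_pos ha, dif_neg hb] at h; simp at h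
      · rw [dif_neg ha, dif_pos hb] at h; simp at h
      · rw [dif_neg ha, dif_neg hb] at h
        rw [Sum.inr.injEq, Subtype.mk.injEq] at h
        refine Quotient.sound ?_
        have hbmem : b ∈ (σ.cycleOf b).support :=
          Equiv.Perm.mem_support_cycleOf_iff.mpr ⟨Equiv.Perm.SameCycle.rfl,
            Equiv.Perm.mem_support.mpr hb⟩
        rw [← h] at hbmem
        exact (Equiv.Perm.mem_support_cycleOf_iff.mp hbmem).1
    · rintro (⟨a, ha⟩ | ⟨c, hc⟩)
      · exact ⟨Quotient.mk _ a, by simp only [f, Quotient.lift_mk, g, dif_pos ha]⟩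
      · obtain ⟨a, ha⟩ := (Equiv.Perm.mem_cycleFactorsFinset_iff.mp hc).1.nonempty_support
        have hc' : c = σ.cycleOf a := Equiv.Perm.cycle_is_cycleOf ha hc
        have haσ : ¬ σ a = a := by
          have := Equiv.Perm.mem_cycleFactorsFinset_support_le hc ha
          exact Equiv.Perm.mem_support.mp this
        refine ⟨Quotient.mk _ a, ?_⟩
        simp only [f, Quotient.lift_mk, g, dif_neg haσ]
        congr 1
        exact Subtype.ext hc'.symm
  have hcard := Nat.card_congr (Equiv.ofBijective f hbij)
  rw [cOrb, hcard, Nat.card_sum]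
  have h1 : Nat.card {a : Fin n // σ a = a} = n - σ.support.card := by
    rw [Nat.card_eq_fintype_card, Fintype.card_subtype]
    have h2 := Finset.card_filter_add_card_filter_not
      (s := (Finset.univ : Finset (Fin n))) (p := fun a => σ a = a)
    have h3 : σ.support = Finset.univ.filter (fun a => ¬ σ a = a) := rfl
    rw [← h3] at h2
    have h4 : (Finset.univ : Finset (Fin n)).card = n := by simp
    omega
  have h2 : Nat.card {c : Equiv.Perm (Fin n) // c ∈ σ.cycleFactorsFinset} =
      Multiset.card σ.cycleType := by
    rw [Nat.card_eq_fintype_card, Fintype.card_coe, Equiv.Perm.cycleType_def,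
      Multiset.card_map]
    rfl
  rw [h1, h2]

lemma permLen_add_cOrb (σ : Equiv.Perm (Fin n)) : permLen σ + cOrb σ = n := by
  have h1 := cOrb_eq σ
  have h2 := ctc_le_support σ
  have h3 : σ.support.card ≤ n := by
    have := Finset.card_le_univ σ.support
    simpa using this
  unfold permLen
  omega

end Stmt5Aux

namespace Stmt5Aux

lemma cOrb_mul_swap_le (σ : Equiv.Perm (Fin n)) (x y : Fin n) :
    cOrb (σ * Equiv.swap x y) ≤ cOrb σ + 1 := by
  classical
  set ρ := σ * Equiv.swap x y with hρ
  set T : Fin n → Fin n → Prop := fun a b =>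
    ρ.SameCycle a b ∨ (ρ.SameCycle a x ∧ ρ.SameCycle y b) ∨
      (ρ.SameCycle a y ∧ ρ.SameCycle x b) with hT
  have Trefl : ∀ a, T a a := fun a => Or.inl Equiv.Perm.SameCycle.rfl
  have Tsymm : ∀ {a b}, T a b → T b a := by
    rintro a b (h | ⟨h1, h2⟩ | ⟨h1, h2⟩)
    · exact Or.inl h.symm
    · exact Or.inr (Or.inr ⟨h2.symm, h1.symm⟩)
    · exact Or.inr (Or.inl ⟨h2.symm, h1.symm⟩)
  have Ttrans : ∀ {a b c}, T a b → T b c → T a c := by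
    rintro a b c (h | ⟨h1, h2⟩ | ⟨h1, h2⟩) (h' | ⟨h1', h2'⟩ | ⟨h1', h2'⟩)
    · exact Or.inl (h.trans h')
    · exact Or.inr (Or.inl ⟨h.trans h1', h2'⟩)
    · exact Or.inr (Or.inr ⟨h.trans h1', h2'⟩)
    · exact Or.inr (Or.inl ⟨h1, h2.trans h'⟩)
    · exact Or.inr (Or.inl ⟨h1, h2'⟩)
    · exact Or.inl (h1.trans h2')
    · exact Or.inr (Or.inr ⟨h1, h2.trans h'⟩)
    · exact Or.inl (h1.trans h2')
    · exact Or.inr (Or.inr ⟨h1, h2'⟩)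
  let Ts : Setoid (Fin n) := ⟨T, ⟨Trefl, Tsymm, Ttrans⟩⟩
  -- step: T a (σ a) for all a
  have step : ∀ a : Fin n, T a (σ a) := by
    intro a
    by_cases hax : a = x
    · by_cases hxy : x = y
      · subst hxy
        rw [hax]
        refine Or.inl ⟨1, ?_⟩
        rw [zpow_one, hρ]
        simp
      · rw [hax]
        have hy : ρ y = σ x := by
          rw [hρ]
          simp [Equiv.Perm.mul_apply, Equiv.swap_apply_right]
        exact Or.inr (Or.inl ⟨Equiv.Perm.SameCycle.rfl, ⟨1, by simpa using hy⟩⟩)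
    · by_cases hay : a = y
      · rw [hay]
        have hx : ρ x = σ y := by
          rw [hρ]
          simp [Equiv.Perm.mul_apply, Equiv.swap_apply_left]
        exact Or.inr (Or.inr ⟨Equiv.Perm.SameCycle.rfl, ⟨1, by simpa using hx⟩⟩)
      · have h0 : ρ a = σ a := by
          rw [hρ]
          simp [Equiv.Perm.mul_apply, Equiv.swap_apply_of_ne_of_ne hax hay]
        exact Or.inl ⟨1, by simpa using h0⟩
  have stepn : ∀ (m : ℕ) (a : Fin n), T a ((σ ^ m) a) := by
    intro m
    induction m with
    | zero => intro a; simpa using Trefl a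
    | succ m ih =>
      intro a
      have h1 : T ((σ ^ m) a) (σ ((σ ^ m) a)) := step _
      have h2 : (σ ^ (m + 1)) a = σ ((σ ^ m) a) := by
        rw [pow_succ' σ m, Equiv.Perm.mul_apply]
      rw [h2]
      exact Ttrans (ih a) h1
  have mono : ∀ a b : Fin n, σ.SameCycle a b → T a b := by
    rintro a b ⟨i, hi⟩
    rcases le_or_gt 0 i with hpos | hneg
    · have : (σ ^ i.toNat) a = b := by
        rw [← hi, ← zpow_natCast, Int.toNat_of_nonneg hpos]
      rw [← this]
      exact stepn _ a
    · have h2 : (σ ^ (-i).toNat) b = a := by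
        rw [← hi, ← Equiv.Perm.mul_apply, ← zpow_natCast, Int.toNat_of_nonneg (by omega),
          ← zpow_add, neg_add_cancel, zpow_zero, Equiv.Perm.one_apply]
      rw [← h2]
      exact Tsymm (stepn _ b)
  -- surjection from orbits of σ to classes of Ts
  have hsurj : Nat.card (Quotient Ts) ≤ cOrb σ := by
    have hs : Function.Surjective
        (Quotient.map' (s₁ := Equiv.Perm.SameCycle.setoid σ) (s₂ := Ts) id
          (fun a b h => mono a b h)) := by
      intro q
      induction q using Quotient.inductionOn with | _ a =>
      exact ⟨Quotient.mk'' a, rfl⟩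
    exact Nat.card_le_card_of_surjective _ hs
  -- injection from orbits of ρ into Option (classes of Ts)
  have hinj : cOrb ρ ≤ Nat.card (Quotient Ts) + 1 := by
    let g : Fin n → Option (Quotient Ts) :=
      fun a => if ρ.SameCycle a x then none else some (Quotient.mk Ts a)
    have hwd : ∀ a b : Fin n, ρ.SameCycle a b → g a = g b := by
      intro a b hab
      by_cases hax : ρ.SameCycle a x
      · simp only [g]
        rw [if_pos hax, if_pos (hab.symm.trans hax)]
      · simp only [g]
        rw [if_neg hax, if_neg (fun hbx => hax (hab.trans hbx))]
        exact congrArg _ (Quotient.sound (Or.inl hab))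
    have hginj : Function.Injective (Quotient.lift g hwd :
        Quotient (Equiv.Perm.SameCycle.setoid ρ) → Option (Quotient Ts)) := by
      intro q1 q2
      induction q1 using Quotient.inductionOn with | _ a =>
      induction q2 using Quotient.inductionOn with | _ b =>
      intro h
      simp only [Quotient.lift_mk, g] at h
      by_cases hax : ρ.SameCycle a x <;> by_cases hbx : ρ.SameCycle b x
      · exact Quotient.sound (hax.trans hbx.symm)
      · rw [if_pos hax, if_neg hbx] at h; simp at h
      · rw [if_neg hax, if_pos hbx] at h; simp at h
      · rw [if_neg hax, if_neg hbx] at h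
        simp only [Option.some.injEq] at h
        have hT : T a b := Quotient.exact h
        rcases hT with h' | ⟨h1, _⟩ | ⟨_, h2⟩
        · exact Quotient.sound h'
        · exact absurd h1 hax
        · exact absurd h2.symm hbx
    letI : Fintype (Quotient Ts) := Fintype.ofFinite _
    have hcard := Nat.card_le_card_of_injective _ hginj
    calc cOrb ρ = Nat.card (Quotient (Equiv.Perm.SameCycle.setoid ρ)) := rfl
      _ ≤ Nat.card (Option (Quotient Ts)) := hcard
      _ = Nat.card (Quotient Ts) + 1 := by
          rw [Nat.card_eq_fintype_card, Fintype.card_option, Nat.card_eq_fintype_card]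
  exact le_trans hinj (by omega)

lemma permLen_mul_swap_le (σ : Equiv.Perm (Fin n)) (x y : Fin n) :
    permLen (σ * Equiv.swap x y) ≤ permLen σ + 1 ∧
      permLen σ ≤ permLen (σ * Equiv.swap x y) + 1 := by
  have h1 := cOrb_mul_swap_le σ x y
  have h2 := cOrb_mul_swap_le (σ * Equiv.swap x y) x y
  rw [mul_swap_mul_self] at h2
  have e1 := permLen_add_cOrb σ
  have e2 := permLen_add_cOrb (σ * Equiv.swap x y)
  omega

lemma sign_eq_permLen (σ : Equiv.Perm (Fin n)) :
    Equiv.Perm.sign σ = (-1 : ℤˣ) ^ permLen σ := by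
  rw [Equiv.Perm.sign_of_cycleType]
  have h : σ.cycleType.sum + Multiset.card σ.cycleType
      = permLen σ + 2 * Multiset.card σ.cycleType := by
    have := ctc_le_support σ
    unfold permLen
    rw [Equiv.Perm.sum_cycleType]
    omega
  rw [h, pow_add, pow_mul]
  norm_num

lemma permLen_mul_isSwap (σ : Equiv.Perm (Fin n)) {t : Equiv.Perm (Fin n)}
    (ht : t.IsSwap) :
    permLen (σ * t) = permLen σ + 1 ∨ permLen (σ * t) + 1 = permLen σ := by
  obtain ⟨x, y, hxy, rfl⟩ := ht
  obtain ⟨h1, h2⟩ := permLen_mul_swap_le σ x y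
  have hne : permLen (σ * Equiv.swap x y) ≠ permLen σ := by
    intro he
    have hs : Equiv.Perm.sign (σ * Equiv.swap x y) = Equiv.Perm.sign σ * (-1 : ℤˣ) := by
      rw [map_mul, Equiv.Perm.sign_swap hxy]
    rw [sign_eq_permLen, sign_eq_permLen, he] at hs
    have h1 : (1 : ℤˣ) = -1 :=
      mul_left_cancel (a := (-1 : ℤˣ) ^ permLen σ) (by rw [mul_one]; exact hs)
    simp at h1
  omega

lemma isSwap_conj {u t : Equiv.Perm (Fin n)} (hu : u.IsSwap) (ht : t.IsSwap) :
    (u * t * u).IsSwap := by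
  obtain ⟨a, b, hab, rfl⟩ := hu
  obtain ⟨p, q, hpq, rfl⟩ := ht
  have h : Equiv.swap a b * Equiv.swap p q * Equiv.swap a b
      = Equiv.swap (Equiv.swap a b p) (Equiv.swap a b q) := by
    rw [Equiv.swap_apply_apply, Equiv.swap_inv]
  exact ⟨_, _, fun he => hpq ((Equiv.swap a b).injective he), h⟩

lemma permLen_mul_isSwap_le (σ : Equiv.Perm (Fin n)) {t : Equiv.Perm (Fin n)}
    (ht : t.IsSwap) : permLen (σ * t) ≤ permLen σ + 1 := by
  rcases permLen_mul_isSwap σ ht with h | h <;> omega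

lemma isSwap_mul_self {t : Equiv.Perm (Fin n)} (ht : t.IsSwap) : t * t = 1 := by
  obtain ⟨x, y, _, rfl⟩ := ht
  exact Equiv.swap_mul_self x y

end Stmt5Aux

open Stmt5Aux

/-- For `g ≥ 3`, an enumeration of the transpositions as above and
`0 ≤ k < (2g-3)(g-2)`: every `σ ∈ A(k)` satisfies either `σ ∈ A(k+1)`, or
`σ' = σ s_{k+1}` satisfies `σ' ∈ A(k+1)`, `l(σ') = l(σ) - 1` and `σ = σ' s_{k+1}`. -/
theorem stmt_5 (g : ℕ) (hg : 3 ≤ g)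
    (s : ℕ → Equiv.Perm (Fin (2 * g - 3)))
    (hswap : ∀ i : ℕ, 1 ≤ i → i ≤ (2 * g - 3) * (g - 2) → (s i).IsSwap)
    (hinj : ∀ i j : ℕ, 1 ≤ i → i ≤ (2 * g - 3) * (g - 2) →
      1 ≤ j → j ≤ (2 * g - 3) * (g - 2) → s i = s j → i = j)
    (hsurj : ∀ t : Equiv.Perm (Fin (2 * g - 3)), t.IsSwap →
      ∃ i : ℕ, 1 ≤ i ∧ i ≤ (2 * g - 3) * (g - 2) ∧ s i = t)
    (hprod : permLen (((List.range (2 * g - 4)).map (fun i => s (i + 1))).prod) = 2 * g - 4)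
    (k : ℕ) (hk : k < (2 * g - 3) * (g - 2))
    (σ : Equiv.Perm (Fin (2 * g - 3))) (hσ : σ ∈ AkSet s k) :
    σ ∈ AkSet s (k + 1) ∨
      (σ * s (k + 1) ∈ AkSet s (k + 1) ∧
        permLen (σ * s (k + 1)) + 1 = permLen σ ∧
        σ = (σ * s (k + 1)) * s (k + 1)) := by
  have hks : (s (k + 1)).IsSwap := hswap (k + 1) (by omega) (by omega)
  by_cases hlt : permLen σ < permLen (σ * s (k + 1))
  · left
    intro i h1 h2
    rcases Nat.lt_or_ge i (k + 1) with hi | hi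
    · exact hσ i h1 (by omega)
    · have : i = k + 1 := by omega
      rw [this]
      exact hlt
  · right
    have hlen : permLen (σ * s (k + 1)) + 1 = permLen σ := by
      rcases permLen_mul_isSwap σ hks with h | h
      · omega
      · exact h
    have hinv : s (k + 1) * s (k + 1) = 1 := isSwap_mul_self hks
    have hσeq : σ = σ * s (k + 1) * s (k + 1) := by
      rw [mul_assoc, hinv, mul_one]
    refine ⟨?_, hlen, hσeq⟩
    intro i h1 h2
    rcases Nat.lt_or_ge i (k + 1) with hi | hi
    · -- i ≤ k
      have hik : i ≤ k := by omega
      have his : (s i).IsSwap := hswap i h1 (by omega)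
      rcases permLen_mul_isSwap (σ * s (k + 1)) his with h | h
      · omega
      · exfalso
        have hiinv : s i * s i = 1 := isSwap_mul_self his
        have hc : (s i * (s (k + 1) * s i)).IsSwap := by
          have := isSwap_conj his hks
          rwa [mul_assoc] at this
        have heq : (σ * s (k + 1) * s i) * (s i * (s (k + 1) * s i)) = σ * s i := by
          simp only [← mul_assoc]
          rw [mul_assoc (σ * s (k + 1)) (s i) (s i), hiinv, mul_one,
            mul_assoc σ (s (k + 1)) (s (k + 1)), hinv, mul_one]
        have hle := permLen_mul_isSwap_le (σ * s (k + 1) * s i) hc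
        rw [heq] at hle
        have hgt := hσ i h1 hik
        omega
    · -- i = k + 1
      have : i = k + 1 := by omega
      rw [this, ← hσeq]
      omega
end
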